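/- Let b ∈ ℤ and f(x) = (x + b²)² - b² - 1 be irreducible over ℚ. Then f^n is irreducible over ℚ for all n ≥ 1, and for every prime p, f^3 mod p is reducible over 𝔽_p. -/

import Mathlib

/-!
Conjugating by `x ↦ x + b²` turns `f` into `u ↦ u² - 1`, whose critical orbit `0 ↦ -1 ↦ 0` is
periodic; for `f` itself the orbit is `-b² - 1 ↦ -b² ↦ -b² - 1`.

Over `ℚ`, `f^(n+1)(x) = h((x + b²)²)` with `h(y) = f^n(y - b² - 1)`. If `h` is irreducible and
`h(X²)` is not, a root `α` of `h` is a square in `ℚ(α)`, so its norm `h(0) = f^n(-b² - 1)` is a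
square in `ℚ`; but that value is `-b²` or `-b² - 1`, which is negative.

Modulo `p`, put `c = b² + 1`, so that `f^3(u - b²) = (u⁴ - 2u²)² - c`. If `c` is a square this
is a difference of squares. If `c` is not but `-1 = i²` is, then
`f^2(u - b²) = u⁴ - 2u² - b² = (u² + su + t)(u² - su + t)` with `t = ±ib`, `s² = 2 + 2t`, and
`f^3 = f^2 ∘ f`. If neither is a square, the octic is `(u⁴ + Bu² + D)² - (Au³ + Cu)²`, where the
coefficients come from the chain of square roots `D² = -c`, `τ² = 2D`, `ν² = 2τ² + 4τ + 4`,
`A² = 4 + 2τ + 2ν`: each exists after a change of sign of the previous one, because the product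
of the two candidates is a square times a non-square.
-/

open Polynomial

/-- The `n`-th iterate of a polynomial under composition. -/
noncomputable def iter {R : Type*} [CommRing R] (f : Polynomial R) : ℕ → Polynomial R
  | 0 => Polynomial.X
  | n + 1 => f.comp (iter f n)

section Iterates

variable {R : Type*} [CommRing R] (f : R[X])

@[simp]
lemma iter_zero : iter f 0 = X := rfl

lemma iter_succ (n : ℕ) : iter f (n + 1) = f.comp (iter f n) := rfl

@[simp]
lemma iter_one : iter f 1 = f := by simp [iter_succ]

lemma iter_succ' (n : ℕ) : iter f (n + 1) = (iter f n).comp f := by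
  induction n with
  | zero => simp [iter_succ]
  | succ n ih => conv_lhs => rw [iter_succ, ih, ← comp_assoc, ← iter_succ]

lemma natDegree_iter [IsDomain R] (n : ℕ) : (iter f n).natDegree = f.natDegree ^ n := by
  induction n with
  | zero => simp
  | succ n ih => rw [iter_succ, natDegree_comp, ih, pow_succ']

lemma Polynomial.Monic.iter {f : R[X]} (hf : f.Monic) (hd : f.natDegree ≠ 0) (n : ℕ) :
    (iter f n).Monic := by
  induction n with
  | zero => exact monic_X
  | succ n ih => rw [iter_succ']; exact ih.comp hf hd

end Iterates

lemma irreducible_comp_X_add_C_iff {R : Type*} [CommRing R] {p : R[X]} (a : R) :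
    Irreducible (p.comp (X + C a)) ↔ Irreducible p :=
  MulEquiv.irreducible_iff (algEquivAevalXAddC a).toMulEquiv

lemma not_irreducible_of_eq_mul {K : Type*} [Field K] {p q r : K[X]} (h : p = q * r)
    (hq : q.natDegree ≠ 0) (hr : r.natDegree ≠ 0) : ¬Irreducible p := fun hp =>
  (hp.isUnit_or_isUnit h).elim (fun hu => hq (natDegree_eq_zero_of_isUnit hu))
    (fun hu => hr (natDegree_eq_zero_of_isUnit hu))

-- `(-1) ^ natDegree h * h.coeff 0` is the norm of a root of `h`.
open IntermediateField in
theorem irreducible_comp_X_sq {K : Type*} [Field K] {h : K[X]} (hm : h.Monic)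
    (hi : Irreducible h) (hsq : ¬IsSquare ((-1) ^ h.natDegree * h.coeff 0)) :
    Irreducible (h.comp (X ^ 2)) := by
  refine irreducible_comp hm (monic_X_pow 2) hi fun E _ _ x hx => ?_
  have hx' : IsIntegral K x := minpoly.ne_zero_iff.mp (hx ▸ hi.ne_zero)
  rw [Polynomial.map_pow, map_X]
  refine X_pow_sub_C_irreducible_of_prime Nat.prime_two fun z hz => hsq ⟨Algebra.norm K z, ?_⟩
  have := Algebra.PowerBasis.norm_gen_eq_coeff_zero_minpoly (adjoin.powerBasis hx')
  rw [adjoin.powerBasis_gen, minpoly_gen, adjoin.powerBasis_dim, hx, ← hz, pow_two,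
    map_mul] at this
  exact this.symm

noncomputable def quadPCF {R : Type*} [CommRing R] (β : R) : R[X] := (X + C β) ^ 2 - C β - 1

section QuadPCF

variable {R : Type*} [CommRing R] (β : R)

lemma map_quadPCF {S : Type*} [CommRing S] (φ : R →+* S) :
    (quadPCF β).map φ = quadPCF (φ β) := by
  simp [quadPCF]

lemma quadPCF_eq_comp : quadPCF β = ((X + C (-β - 1)).comp (X ^ 2)).comp (X + C β) := by
  simp only [quadPCF, add_comp, pow_comp, X_comp, C_comp]
  simp only [map_sub, map_neg, map_one]
  ring

lemma natDegree_quadPCF [Nontrivial R] : (quadPCF β).natDegree = 2 := by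
  unfold quadPCF; compute_degree!

lemma monic_quadPCF [Nontrivial R] : (quadPCF β).Monic := by
  unfold quadPCF; monicity!

lemma eval_quadPCF_neg_sub_one : (quadPCF β).eval (-β - 1) = -β := by
  simp only [quadPCF, eval_sub, eval_pow, eval_add, eval_X, eval_C, eval_one]
  ring

lemma eval_quadPCF_neg : (quadPCF β).eval (-β) = -β - 1 := by
  simp [quadPCF]

lemma eval_iter_quadPCF (n : ℕ) :
    (iter (quadPCF β) n).eval (-β - 1) = if Even n then -β - 1 else -β := by
  induction n with
  | zero => simp
  | succ n ih =>
    rw [iter_succ, eval_comp, ih]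
    by_cases h : Even n <;> simp [h, Nat.even_add_one, eval_quadPCF_neg_sub_one, eval_quadPCF_neg]

lemma iter_succ_quadPCF (n : ℕ) : iter (quadPCF β) (n + 1) =
    (((iter (quadPCF β) n).comp (X + C (-β - 1))).comp (X ^ 2)).comp (X + C β) := by
  rw [iter_succ', quadPCF_eq_comp]
  simp only [comp_assoc]

lemma iter_three_quadPCF :
    iter (quadPCF β) 3 = ((X ^ 4 - 2 * X ^ 2) ^ 2 - C (β + 1)).comp (X + C β) := by
  simp only [iter_succ, iter_zero, quadPCF, sub_comp, pow_comp, add_comp, X_comp, C_comp,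
    one_comp, mul_comp, ofNat_comp, comp_X, map_add, map_one]
  ring

lemma not_isSquare_add_one_of_irreducible_quadPCF {K : Type*} [Field K] {β : K}
    (hf : Irreducible (quadPCF β)) : ¬IsSquare (β + 1) := by
  rintro ⟨w, hw⟩
  refine not_irreducible_of_eq_mul (q := X + C (β - w)) (r := X + C (β + w)) ?_
    ((natDegree_X_add_C _).trans_ne one_ne_zero) ((natDegree_X_add_C _).trans_ne one_ne_zero) hf
  have hwC : C β + 1 = C w * C w := by rw [← C_mul, ← hw, C_add, C_1]
  simp only [quadPCF, map_sub, map_add]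
  linear_combination -hwC

theorem irreducible_iter_quadPCF {K : Type*} [Field K] {β : K} (hf : Irreducible (quadPCF β))
    (hβ : ¬IsSquare (-β)) (hβ₁ : ¬IsSquare (-β - 1)) {n : ℕ} (hn : 1 ≤ n) :
    Irreducible (iter (quadPCF β) n) := by
  induction n, hn using Nat.le_induction with
  | base => rwa [iter_one]
  | succ n hn ih =>
    rw [iter_succ_quadPCF, irreducible_comp_X_add_C_iff]
    have hm := ((monic_quadPCF β).iter (by simp [natDegree_quadPCF]) n).comp_X_add_C (-β - 1)
    refine irreducible_comp_X_sq hm ((irreducible_comp_X_add_C_iff _).mpr ih) ?_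
    have heven : Even (2 ^ n) := (Nat.even_pow' (by omega)).mpr even_two
    rw [natDegree_comp, natDegree_iter, natDegree_quadPCF, natDegree_X_add_C, mul_one,
      heven.neg_one_pow, one_mul, coeff_zero_eq_eval_zero, eval_comp, eval_add, eval_X, eval_C,
      zero_add, eval_iter_quadPCF]
    split_ifs
    · exact hβ₁
    · exact hβ

end QuadPCF

lemma not_isSquare_sq_mul {K : Type*} [Field K] {a z : K} (ha : ¬IsSquare a) (hz : z ≠ 0) :
    ¬IsSquare (z ^ 2 * a) := by
  rintro ⟨r, hr⟩
  exact ha ⟨r / z, by field_simp; linear_combination hr⟩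

namespace FiniteField

variable {F : Type*} [Field F] [Finite F]

lemma isSquare_mul_of_not_isSquare {a b : F} (ha : ¬IsSquare a) (hb : ¬IsSquare b) :
    IsSquare (a * b) := by
  have := Fintype.ofFinite F
  classical
  have hab : a * b ≠ 0 := mul_ne_zero (fun h => ha (h ▸ .zero)) (fun h => hb (h ▸ .zero))
  rw [← quadraticChar_one_iff_isSquare hab, map_mul,
    quadraticChar_neg_one_iff_not_isSquare.mpr ha, quadraticChar_neg_one_iff_not_isSquare.mpr hb,
    neg_one_mul, neg_neg]

lemma exists_sq_eq_sq_isSquare_apply (φ : F → F) {y : F} (h : ¬IsSquare (φ y * φ (-y))) :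
    ∃ y', y' ^ 2 = y ^ 2 ∧ IsSquare (φ y') := by
  by_contra! h'
  exact h (isSquare_mul_of_not_isSquare (h' y rfl) (h' (-y) (neg_sq y)))

lemma two_ne_zero_of_not_isSquare {a : F} (ha : ¬IsSquare a) : (2 : F) ≠ 0 :=
  Ring.two_ne_zero fun h => ha (isSquare_of_char_two h a)

end FiniteField

section Octic

variable {K : Type*} [Field K]

lemma not_irreducible_octic_of_isSquare {c : K} (hc : IsSquare c) :
    ¬Irreducible ((X ^ 4 - 2 * X ^ 2) ^ 2 - C c) := by
  obtain ⟨w, rfl⟩ := hc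
  have hq : (X ^ 4 - 2 * X ^ 2 - C w).natDegree = 4 := by compute_degree!
  have hr : (X ^ 4 - 2 * X ^ 2 + C w).natDegree = 4 := by compute_degree!
  exact not_irreducible_of_eq_mul (by rw [C_mul]; ring) (hq.trans_ne four_ne_zero)
    (hr.trans_ne four_ne_zero)

lemma not_irreducible_octic_of_quadratic {b s t : K} (ht : t ^ 2 = -b ^ 2)
    (hs : s ^ 2 = 2 + 2 * t) : ¬Irreducible ((X ^ 4 - 2 * X ^ 2) ^ 2 - C (b ^ 2 + 1)) := by
  have htC : C t ^ 2 = -C b ^ 2 := by rw [← C_pow, ht, C_neg, C_pow]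
  have hsC := congrArg C hs
  simp only [map_add, map_mul, map_pow, map_ofNat] at hsC
  have hq : ((X ^ 2 - 1) ^ 2 + C s * (X ^ 2 - 1) + C t).natDegree = 4 := by compute_degree!
  have hr : ((X ^ 2 - 1) ^ 2 - C s * (X ^ 2 - 1) + C t).natDegree = 4 := by compute_degree!
  refine not_irreducible_of_eq_mul ?_ (hq.trans_ne four_ne_zero) (hr.trans_ne four_ne_zero)
  simp only [map_add, map_pow, map_one]
  linear_combination (X ^ 2 - 1) ^ 2 * hsC - htC

lemma not_irreducible_octic_of_quartic {c A B C' D : K} (hD : D ^ 2 = -c)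
    (hB : 2 * B = A ^ 2 - 4) (hC : 2 * A * C' = B ^ 2 + 2 * D - 4) (hC' : C' ^ 2 = 2 * B * D) :
    ¬Irreducible ((X ^ 4 - 2 * X ^ 2) ^ 2 - C c) := by
  have hDC := congrArg C hD
  have hBC := congrArg C hB
  have hCC := congrArg C hC
  have hC'C := congrArg C hC'
  simp only [map_add, map_sub, map_mul, map_pow, map_neg, map_ofNat] at hDC hBC hCC hC'C
  have hq : (X ^ 4 + C A * X ^ 3 + C B * X ^ 2 + C C' * X + C D).natDegree = 4 := by
    compute_degree!
  have hr : (X ^ 4 - C A * X ^ 3 + C B * X ^ 2 - C C' * X + C D).natDegree = 4 := by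
    compute_degree!
  refine not_irreducible_of_eq_mul ?_ (hq.trans_ne four_ne_zero) (hr.trans_ne four_ne_zero)
  linear_combination -X ^ 6 * hBC + X ^ 4 * hCC + X ^ 2 * hC'C - hDC

end Octic

section FiniteFieldReduction

open FiniteField

variable {F : Type*} [Field F] [Finite F]

lemma exists_quartic_coeffs {b : F} (hm1 : ¬IsSquare (-1 : F)) (hc : ¬IsSquare (b ^ 2 + 1)) :
    ∃ A B C D : F, D ^ 2 = -(b ^ 2 + 1) ∧ 2 * B = A ^ 2 - 4 ∧
      2 * A * C = B ^ 2 + 2 * D - 4 ∧ C ^ 2 = 2 * B * D := by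
  have h2 : (2 : F) ≠ 0 := two_ne_zero_of_not_isSquare hc
  have hb : b ≠ 0 := by rintro rfl; exact hc ⟨1, by ring⟩
  obtain ⟨D₀, hD₀⟩ := isSquare_mul_of_not_isSquare hm1 hc
  have hD₀ne : D₀ ≠ 0 := by rintro rfl; exact hc ⟨0, by linear_combination -hD₀⟩
  obtain ⟨D, hD, τ, hτ⟩ := exists_sq_eq_sq_isSquare_apply (fun d => 2 * d) (y := D₀) <| by
    rw [show 2 * D₀ * (2 * -D₀) = (2 * D₀) ^ 2 * -1 by ring]
    exact not_isSquare_sq_mul hm1 (mul_ne_zero h2 hD₀ne)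
  obtain ⟨τ', hτ', ν, hν⟩ :=
      exists_sq_eq_sq_isSquare_apply (fun t => 2 * t ^ 2 + 4 * t + 4) (y := τ) <| by
    rw [show (2 * τ ^ 2 + 4 * τ + 4) * (2 * (-τ) ^ 2 + 4 * -τ + 4) = (2 ^ 2 * b) ^ 2 * -1 by
      linear_combination (-4 * (τ ^ 2 + 2 * D)) * hτ + 16 * hD - 16 * hD₀]
    exact not_isSquare_sq_mul hm1 (mul_ne_zero (pow_ne_zero 2 h2) hb)
  have hDne : D ≠ 0 := by
    rintro rfl
    exact hD₀ne (pow_eq_zero_iff two_ne_zero |>.mp (by linear_combination -hD))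
  have hτ'ne : τ' ≠ 0 := by
    rintro rfl
    exact mul_ne_zero h2 hDne (by linear_combination hτ - hτ')
  obtain ⟨ν', hν', A, hA⟩ :=
      exists_sq_eq_sq_isSquare_apply (fun v => 4 + 2 * τ' + 2 * v) (y := ν) <| by
    rw [show (4 + 2 * τ' + 2 * ν) * (4 + 2 * τ' + 2 * -ν) = (2 * τ') ^ 2 * -1 by
      linear_combination 4 * hν]
    exact not_isSquare_sq_mul hm1 (mul_ne_zero h2 hτ'ne)
  have hν₂ : ν' ^ 2 = 2 * τ' ^ 2 + 4 * τ' + 4 := by linear_combination hν' - hν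
  have hD₂ : 2 * D = τ' ^ 2 := by linear_combination hτ - hτ'
  have hAne : A ≠ 0 := by
    rintro rfl
    refine hτ'ne (pow_eq_zero_iff two_ne_zero |>.mp (mul_left_cancel₀ h2 ?_))
    linear_combination -2 * hν₂ + (ν' - τ' - 2) * hA
  refine ⟨A, τ' + ν', τ' * (2 * τ' + ν' + 2) / A, D, by linear_combination hD - hD₀,
    by linear_combination hA, ?_, ?_⟩
  · field_simp
    linear_combination -hν₂ - hD₂
  · field_simp
    linear_combination -τ' ^ 2 * hν₂ - (τ' + ν') * A ^ 2 * hD₂ + (τ' + ν') * τ' ^ 2 * hA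

lemma not_irreducible_octic (b : F) :
    ¬Irreducible ((X ^ 4 - 2 * X ^ 2) ^ 2 - C (b ^ 2 + 1)) := by
  by_cases hc : IsSquare (b ^ 2 + 1)
  · exact not_irreducible_octic_of_isSquare hc
  by_cases hm1 : IsSquare (-1 : F)
  · obtain ⟨i, hi⟩ := hm1
    obtain ⟨t, ht, s, hs⟩ :=
        exists_sq_eq_sq_isSquare_apply (fun t => 2 + 2 * t) (y := i * b) <| by
      rw [show (2 + 2 * (i * b)) * (2 + 2 * -(i * b)) = 2 ^ 2 * (b ^ 2 + 1) by
        linear_combination (4 * b ^ 2) * hi]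
      exact not_isSquare_sq_mul hc (two_ne_zero_of_not_isSquare hc)
    exact not_irreducible_octic_of_quadratic (b := b) (s := s) (t := t)
      (by linear_combination ht - b ^ 2 * hi)
      (by linear_combination -hs)
  · obtain ⟨A, B, C, D, hD, hB, hC, hC'⟩ := exists_quartic_coeffs hm1 hc
    exact not_irreducible_octic_of_quartic hD hB hC hC'

theorem not_irreducible_iter_three_quadPCF (b : F) : ¬Irreducible (iter (quadPCF (b ^ 2)) 3) := by
  rw [iter_three_quadPCF, irreducible_comp_X_add_C_iff]
  exact not_irreducible_octic b

end FiniteFieldReduction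

/-- For `f(x) = (x + b^2)^2 - b^2 - 1` irreducible over ℚ: all iterates are irreducible
over ℚ, and `f^3` is reducible modulo every prime. -/
theorem stmt16 (b : ℤ) (f : Polynomial ℤ)
    (hf : f = (X + C (b ^ 2)) ^ 2 - C (b ^ 2) - 1)
    (hirr : Irreducible (Polynomial.map (Int.castRingHom ℚ) f)) :
    (∀ n : ℕ, 1 ≤ n → Irreducible (iter (Polynomial.map (Int.castRingHom ℚ) f) n)) ∧
    (∀ p : ℕ, p.Prime →
        ¬ Irreducible (iter (Polynomial.map (Int.castRingHom (ZMod p)) f) 3)) := by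
  have hmap (S : Type) [CommRing S] : f.map (Int.castRingHom S) = quadPCF ((b : S) ^ 2) := by
    rw [hf, show (X + C (b ^ 2)) ^ 2 - C (b ^ 2) - 1 = quadPCF (b ^ 2) from rfl, map_quadPCF]
    simp
  rw [hmap] at hirr ⊢
  have hb : (b : ℚ) ≠ 0 := fun h =>
    not_isSquare_add_one_of_irreducible_quadPCF hirr ⟨1, by rw [h]; norm_num⟩
  refine ⟨fun n hn => irreducible_iter_quadPCF hirr ?_ ?_ hn, fun p hp => ?_⟩
  · exact fun h => (neg_neg_of_pos (by positivity)).not_ge h.nonneg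
  · exact fun h => by nlinarith [h.nonneg, sq_nonneg (b : ℚ)]
  · have := Fact.mk hp
    rw [hmap]
    exact not_irreducible_iter_three_quadPCF _
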